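/- arXiv:1301.4869 — 4 statements merged into one kernel-verified Lean document; each statement's English description precedes it below -/
import Mathlib

section
/- Let n ≥ 1, let K_1 < K_2 < ⋯ < K_n be positive reals, and let 0 ≤ x_1 < x_2 < ⋯ < x_{n+2} satisfy x_2 ≤ K_1, x_k ∈ (K_{k−2}, K_{k−1}] for k = 3,…,n+1, and x_{n+2} > K_n. Then the (n+2)×(n+2) real matrix A with first row A_{1,k} = 1, second row A_{2,k} = x_k, and rows A_{2+j,k} = max(x_k − K_j, 0) for j = 1,…,n, is invertible. -/
/-- The calibration matrix, with rows (1,…,1), (x_1,…,x_{n+2}) and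
((x_k − K_j)_+)_k for j = 1,…,n, is invertible when the grid points are
interlaced with the strikes. -/
theorem calibration_matrix_invertible
    (n : ℕ) (hn : 1 ≤ n) (K x : ℕ → ℝ)
    (hKpos : ∀ j, 1 ≤ j → j ≤ n → 0 < K j)
    (hKmono : ∀ j, 1 ≤ j → j < n → K j < K (j + 1))
    (hx1 : 0 ≤ x 1)
    (hxmono : ∀ k, 1 ≤ k → k < n + 2 → x k < x (k + 1))
    (hx2 : x 2 ≤ K 1)
    (hxk : ∀ k, 3 ≤ k → k ≤ n + 1 → K (k - 2) < x k ∧ x k ≤ K (k - 1))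
    (hxn2 : K n < x (n + 2))
    (A : Matrix (Fin (n + 2)) (Fin (n + 2)) ℝ)
    (hA : ∀ i k : Fin (n + 2), A i k =
      if i.1 = 0 then 1
      else if i.1 = 1 then x (k.1 + 1)
      else max (x (k.1 + 1) - K (i.1 - 1)) 0) :
    IsUnit A := by
  -- K is (weakly) monotone on [1, n]
  have hKle : ∀ j j' : ℕ, 1 ≤ j → j ≤ j' → j' ≤ n → K j ≤ K j' := by
    intro j j' hj hjj' hj'
    induction j' with
    | zero => omega
    | succ m ih =>
      rcases Nat.lt_or_ge j (m + 1) with h | h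
      · exact le_trans (ih (by omega) (by omega))
          (le_of_lt (hKmono m (by omega) (by omega)))
      · have hjm : j = m + 1 := by omega
        exact le_of_eq (by rw [hjm])
  have hxle : ∀ m : ℕ, 1 ≤ m → m ≤ n → x (m + 1) ≤ K m := by
    intro m h1 h2
    rcases Nat.lt_or_ge m 2 with h | h
    · have hm : m = 1 := by omega
      subst hm; exact hx2
    · have h3 := (hxk (m + 1) (by omega) (by omega)).2
      simpa using h3
  have hxgt : ∀ m : ℕ, 1 ≤ m → m ≤ n → K m < x (m + 2) := by
    intro m h1 h2
    rcases Nat.lt_or_ge m n with h | h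
    · have h3 := (hxk (m + 2) (by omega) (by omega)).1
      simpa using h3
    · have hm : m = n := by omega
      subst hm; exact hxn2
  -- a key entrywise bound: below-diagonal entries in rows ≥ 2 vanish
  have hzero : ∀ i j : Fin (n + 2), 2 ≤ i.1 → j.1 < i.1 →
      x (j.1 + 1) ≤ K (i.1 - 1) := by
    intro i j hi2 hji
    have hi1n : i.1 - 1 ≤ n := by omega
    rcases Nat.eq_zero_or_pos j.1 with hj0 | hj1
    · have h12 : x 1 < x 2 := by simpa using hxmono 1 le_rfl (by omega)
      have hK1 : K 1 ≤ K (i.1 - 1) := hKle 1 (i.1 - 1) le_rfl (by omega) hi1n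
      rw [hj0]
      simpa using le_trans (le_of_lt (lt_of_lt_of_le h12 hx2)) hK1
    · calc x (j.1 + 1) ≤ K j.1 := hxle j.1 hj1 (by omega)
        _ ≤ K (i.1 - 1) := hKle j.1 (i.1 - 1) hj1 (by omega) hi1n
  set B := A.updateRow 1 (A 1 + (-(x 1)) • A 0) with hBdef
  have h10 : (1 : Fin (n + 2)) ≠ 0 := by
    simp [Fin.ext_iff]
  have hdet : B.det = A.det := Matrix.det_updateRow_add_smul_self A h10 (-(x 1))
  have hBtri : B.BlockTriangular id := by
    intro i j hij
    have hij' : j.1 < i.1 := hij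
    by_cases hi1 : i = 1
    · subst hi1
      have h1v : ((1 : Fin (n + 2)) : ℕ) = 1 := rfl
      rw [h1v] at hij'
      have hj0 : j.1 = 0 := by omega
      rw [hBdef, Matrix.updateRow_self]
      simp [hA, hj0, Fin.val_one, Fin.val_zero]
    · have hBij : B i j = A i j := by
        rw [hBdef, Matrix.updateRow_ne hi1]
      have hi1' : i.1 ≠ 1 := fun h => hi1 (Fin.ext (by simp [h]))
      have hi0 : i.1 ≠ 0 := by omega
      have hi2 : 2 ≤ i.1 := by omega
      rw [hBij, hA, if_neg hi0, if_neg hi1']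
      exact max_eq_right (by linarith [hzero i j hi2 hij'])
  have hdiag : ∀ i : Fin (n + 2), B i i ≠ 0 := by
    intro i
    by_cases hi1 : i = 1
    · subst hi1
      rw [hBdef, Matrix.updateRow_self]
      have h1v : ((1 : Fin (n + 2)) : ℕ) = 1 := rfl
      have h0v : ((0 : Fin (n + 2)) : ℕ) = 0 := rfl
      simp only [Pi.add_apply, Pi.smul_apply, hA, h1v, h0v, smul_eq_mul]
      norm_num
      have := hxmono 1 le_rfl (by omega)
      intro h; linarith
    · have hBii : B i i = A i i := by
        rw [hBdef, Matrix.updateRow_ne hi1]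
      have hi1' : i.1 ≠ 1 := fun h => hi1 (Fin.ext (by simp [h]))
      rcases Nat.eq_zero_or_pos i.1 with hi0 | hip
    
      · rw [hBii, hA, if_pos hi0]; norm_num
      · have hi2 : 2 ≤ i.1 := by omega
        rw [hBii, hA, if_neg (by omega), if_neg hi1']
        have hk : K (i.1 - 1) < x (i.1 + 1) := by
          have := hxgt (i.1 - 1) (by omega) (by omega)
          have he : i.1 - 1 + 2 = i.1 + 1 := by omega
          rwa [he] at this
        have : 0 < x (i.1 + 1) - K (i.1 - 1) := by linarith
        rw [max_eq_left (le_of_lt this)]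
        exact ne_of_gt this
  rw [Matrix.isUnit_iff_isUnit_det, ← hdet, Matrix.det_of_upperTriangular hBtri]
  exact isUnit_iff_ne_zero.mpr (Finset.prod_ne_zero_iff.mpr fun i _ => hdiag i)
end

section
/- Let n ≥ 2, let 0 = K_0 < K_1 < ⋯ < K_n, and let G^0, G^1, …, G^n ≥ 0 satisfy (C1) and (C2). Suppose 0 ≤ x_1, x_k = K_{k−1} for k = 2,…,n+1, K_2 − K_1 > G^1 − G^2, G^{n−1} > G^n, x_1 ≤ (G^0(K_2 − K_1) + G^2 K_1 − G^1 K_2)/((K_2 − K_1) − (G^1 − G^2)), and x_{n+2} ≥ (G^{n−1} K_n − G^n K_{n−1})/(G^{n−1} − G^n). Then there exists a probability measure μ on ℝ supported on the finite set {x_1, …, x_{n+2}} such that ∫ x dμ(x) = G^0 and ∫ max(x − K_j, 0) dμ(x) = G^j for every j = 1,…,n. -/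
open Finset MeasureTheory

/-- Abel-type summation decomposition. -/
lemma sum_decomp (t g : ℕ → ℝ) : ∀ N : ℕ, ∑ i ∈ Finset.Icc 1 (N+1), (t (i-1) - t i) * g i
    = ∑ i ∈ Finset.range N, t (i+1) * (g (i+2) - g (i+1)) + t 0 * g 1 - t (N+1) * g (N+1) := by
  intro N
  induction N with
  | zero => simp; ring
  | succ N ih =>
    rw [Finset.sum_Icc_succ_top (by omega : 1 ≤ N+1+1), ih, Finset.sum_range_succ]
    have : (N + 1 + 1) - 1 = N + 1 := by omega
    rw [this]
    ring

set_option maxHeartbeats 2000000 in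
/-- Under the no-arbitrage conditions there exists a probability measure on ℝ,
supported on the finite grid {x_1, …, x_{n+2}}, that reproduces the forward
price of the underlying and of every call payoff. -/
theorem exists_calibrating_probability_measure
    (n : ℕ) (hn : 2 ≤ n) (K G x : ℕ → ℝ)
    (hK0 : K 0 = 0)
    (hKmono : ∀ j, j < n → K j < K (j + 1))
    (hGnonneg : ∀ j, j ≤ n → 0 ≤ G j)
    (hC1a : ∀ j, 1 ≤ j → j ≤ n → 0 ≤ G (j - 1) - G j)
    (hC1b : ∀ j, 1 ≤ j → j ≤ n → G (j - 1) - G j ≤ K j - K (j - 1))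
    (hC2 : ∀ j, 1 ≤ j → j ≤ n - 1 →
      0 ≤ G (j - 1) - (K (j + 1) - K (j - 1)) / (K (j + 1) - K j) * G j
        + (K j - K (j - 1)) / (K (j + 1) - K j) * G (j + 1))
    (hx1nonneg : 0 ≤ x 1)
    (hxk : ∀ k, 2 ≤ k → k ≤ n + 1 → x k = K (k - 1))
    (h12 : G 1 - G 2 < K 2 - K 1)
    (hGn : G n < G (n - 1))
    (hx1 : x 1 ≤ (G 0 * (K 2 - K 1) + G 2 * K 1 - G 1 * K 2)
        / ((K 2 - K 1) - (G 1 - G 2)))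
    (hxn2 : x (n + 2) ≥ (G (n - 1) * K n - G n * K (n - 1)) / (G (n - 1) - G n)) :
    ∃ μ : Measure ℝ, IsProbabilityMeasure μ ∧
      μ (((Finset.Icc 1 (n + 2)).image x : Finset ℝ) : Set ℝ)ᶜ = 0 ∧
      (∫ y, y ∂μ = G 0) ∧
      (∀ j, 1 ≤ j → j ≤ n → ∫ y, max (y - K j) 0 ∂μ = G j) := by
  -- basic facts about K
  have hKle : ∀ a b, a ≤ b → b ≤ n → K a ≤ K b := by
    intro a b
    induction b with
    | zero => intro hab _; exact le_of_eq (congrArg K (by omega : a = 0))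
    | succ m ih =>
      intro hab hbn
      rcases Nat.eq_or_lt_of_le hab with h | h
      · rw [h]
      · exact le_trans (ih (by omega) (by omega)) (hKmono m (by omega)).le
  have hKlt : ∀ a b, a < b → b ≤ n → K a < K b := by
    intro a b hab hbn
    calc K a ≤ K (b-1) := hKle a (b-1) (by omega) (by omega)
      _ < K b := by
          have := hKmono (b-1) (by omega)
          rwa [show b-1+1 = b by omega] at this
  have hK12 : K 1 < K 2 := hKmono 1 (by omega)
  have hKn1n : K (n-1) < K n := hKlt (n-1) n (by omega) le_rfl
  have hD : (0:ℝ) < (K 2 - K 1) - (G 1 - G 2) := by linarith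
  have hGd : (0:ℝ) < G (n-1) - G n := by linarith
  have h1b : G 0 - G 1 ≤ K 1 - 0 := by
    have := hC1b 1 le_rfl (by omega)
    norm_num at this
    rw [hK0] at this
    linarith
  have hx1' : x 1 * ((K 2 - K 1) - (G 1 - G 2)) ≤ G 0 * (K 2 - K 1) + G 2 * K 1 - G 1 * K 2 :=
    (le_div_iff₀ hD).mp hx1
  have hx1leK1 : x 1 ≤ K 1 := by
    refine hx1.trans ?_
    rw [div_le_iff₀ hD]
    nlinarith [mul_nonneg (by linarith : (0:ℝ) ≤ K 2 - K 1) (by linarith : (0:ℝ) ≤ K 1 - G 0 + G 1)]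
  have hxn2' : G (n-1) * K n - G n * K (n-1) ≤ x (n+2) * (G (n-1) - G n) :=
    (div_le_iff₀ hGd).mp hxn2
  have hxn2K : K n ≤ x (n+2) := by
    refine le_trans ?_ hxn2
    rw [le_div_iff₀ hGd]
    nlinarith [hGnonneg n le_rfl]
  -- the tail-mass function
  set t : ℕ → ℝ := fun m =>
    if m = 0 then 1
    else if m = 1 then (if x 1 < K 1 then (G 0 - G 1 - x 1) / (K 1 - x 1) else 1)
    else if m ≤ n then (G (m-1) - G m) / (K m - K (m-1))
    else if m = n + 1 then (if K n < x (n+2) then G n / (x (n+2) - K n) else 0)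
    else 0 with htdef
  have ht0 : t 0 = 1 := by simp only [htdef]; norm_num
  have ht1 : t 1 = (if x 1 < K 1 then (G 0 - G 1 - x 1) / (K 1 - x 1) else 1) := by
    simp only [htdef]; norm_num
  have htm : ∀ m, 2 ≤ m → m ≤ n → t m = (G (m-1) - G m) / (K m - K (m-1)) := by
    intro m h2 hmn
    simp only [htdef]
    rw [if_neg (by omega), if_neg (by omega), if_pos hmn]
  have htn1 : t (n+1) = (if K n < x (n+2) then G n / (x (n+2) - K n) else 0) := by
    simp only [htdef]
    rw [if_neg (by omega), if_neg (by omega), if_neg (by omega)]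
    simp
  have htn2v : t (n+2) = 0 := by
    simp only [htdef]
    rw [if_neg (by omega), if_neg (by omega), if_neg (by omega), if_neg (by omega)]
  -- degenerate left endpoint
  have heq1 : ¬ x 1 < K 1 → G 0 - G 1 - x 1 = 0 := by
    intro hcase
    have hxx : x 1 = K 1 := le_antisymm hx1leK1 (not_lt.mp hcase)
    have h := hx1
    rw [hxx, le_div_iff₀ hD] at h
    have hge : K 1 ≤ G 0 - G 1 := by nlinarith
    linarith
  -- key products
  have hterm1 : t 1 * (x 2 - x 1) = G 0 - G 1 - x 1 := by
    rw [hxk 2 le_rfl (by omega)]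
    norm_num
    by_cases hcase : x 1 < K 1
    · rw [ht1, if_pos hcase, div_mul_cancel₀ _ (by linarith : K 1 - x 1 ≠ 0)]
    · have h0 := heq1 hcase
      have hxx : x 1 = K 1 := le_antisymm hx1leK1 (not_lt.mp hcase)
      rw [ht1, if_neg hcase]
      linarith
  have hterm : ∀ m, 2 ≤ m → m ≤ n → t m * (x (m+1) - x m) = G (m-1) - G m := by
    intro m h2 hmn
    rw [hxk (m+1) (by omega) (by omega), hxk m h2 (by omega)]
    simp only [Nat.add_sub_cancel]
    rw [htm m h2 hmn]
    have : K (m-1) < K m := hKlt (m-1) m (by omega) hmn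
    rw [div_mul_cancel₀ _ (by linarith : K m - K (m-1) ≠ 0)]
  have htermn1 : t (n+1) * (x (n+2) - x (n+1)) = G n := by
    rw [hxk (n+1) (by omega) le_rfl]
    simp only [Nat.add_sub_cancel]
    by_cases hcase : K n < x (n+2)
    · rw [htn1, if_pos hcase, div_mul_cancel₀ _ (by linarith : x (n+2) - K n ≠ 0)]
    · have hxx : x (n+2) = K n := le_antisymm (not_lt.mp hcase) hxn2K
      have h := hxn2
      rw [ge_iff_le, hxx, div_le_iff₀ hGd] at h
      have hGle : G n ≤ 0 := by nlinarith
      have hG0 : G n = 0 := le_antisymm hGle (hGnonneg n le_rfl)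
      rw [htn1, if_neg hcase, hxx, hG0]
      ring
  -- monotonicity of t (nonnegativity of weights)
  have hp1 : t 1 ≤ 1 := by
    rw [ht1]
    by_cases hcase : x 1 < K 1
    · rw [if_pos hcase, div_le_one (by linarith)]
      linarith
    · rw [if_neg hcase]
  have hp2 : t 2 ≤ t 1 := by
    rw [htm 2 le_rfl hn, ht1]
    norm_num
    by_cases hcase : x 1 < K 1
    · rw [if_pos hcase, div_le_div_iff₀ (by linarith) (by linarith)]
      nlinarith
    · rw [if_neg hcase, div_le_one (by linarith)]
      have := hC1b 2 (by omega) hn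
      norm_num at this
      linarith
  have hpi : ∀ j, 2 ≤ j → j ≤ n-1 → t (j+1) ≤ t j := by
    intro j h2 hjn
    have hc : (0:ℝ) < K (j+1) - K j := by
      have := hKmono j (by omega); linarith
    have hb : (0:ℝ) < K j - K (j-1) := by
      have := hKlt (j-1) j (by omega) (by omega); linarith
    have h := hC2 j (by omega) hjn
    have h3 := mul_nonneg h hc.le
    have heq : (G (j-1) - (K (j+1) - K (j-1)) / (K (j+1) - K j) * G j
        + (K j - K (j-1)) / (K (j+1) - K j) * G (j+1)) * (K (j+1) - K j)
        = G (j-1) * (K (j+1) - K j) - (K (j+1) - K (j-1)) * G j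
          + (K j - K (j-1)) * G (j+1) := by
      field_simp
    rw [heq] at h3
    rw [htm (j+1) (by omega) (by omega), htm j h2 (by omega)]
    simp only [Nat.add_sub_cancel]
    rw [div_le_div_iff₀ hc hb]
    nlinarith [h3]
  have hpn1 : t (n+1) ≤ t n := by
    rw [htn1, htm n (by omega) le_rfl]
    by_cases hcase : K n < x (n+2)
    · rw [if_pos hcase, div_le_div_iff₀ (by linarith) (by linarith)]
      nlinarith
    · rw [if_neg hcase]
      exact div_nonneg (by linarith) (by linarith)
  have hpn2 : 0 ≤ t (n+1) := by
    rw [htn1]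
    by_cases hcase : K n < x (n+2)
    · rw [if_pos hcase]
      exact div_nonneg (hGnonneg n le_rfl) (by linarith)
    · rw [if_neg hcase]
  have hpnn : ∀ i ∈ Finset.Icc 1 (n+2), 0 ≤ t (i-1) - t i := by
    intro i hi
    rw [Finset.mem_Icc] at hi
    have hcases : i = 1 ∨ i = 2 ∨ (3 ≤ i ∧ i ≤ n) ∨ i = n+1 ∨ i = n+2 := by omega
    rcases hcases with rfl | rfl | ⟨h3, h4⟩ | rfl | rfl
    · rw [show (1:ℕ)-1 = 0 from rfl, ht0]; linarith
    · rw [show (2:ℕ)-1 = 1 from rfl]; linarith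
    · have := hpi (i-1) (by omega) (by omega)
      rw [show i-1+1 = i by omega] at this
      linarith
    · rw [show n+1-1 = n from rfl]; linarith
    · rw [show n+2-1 = n+1 from rfl, htn2v]; linarith
  have hsum1 : ∑ i ∈ Finset.Icc 1 (n+2), (t (i-1) - t i) = 1 := by
    have hd := sum_decomp t (fun _ => 1) (n+1)
    simp only [mul_one, sub_self, mul_zero, Finset.sum_const_zero, zero_add] at hd
    rw [show n+1+1 = n+2 from rfl] at hd
    rw [hd, ht0, htn2v]
    ring
  -- the measure
  set μ : Measure ℝ :=
    ∑ i ∈ Finset.Icc 1 (n+2), (ENNReal.ofReal (t (i-1) - t i)) • Measure.dirac (x i) with hμdef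
  have hint : ∀ f : ℝ → ℝ, Measurable f →
      ∫ y, f y ∂μ = ∑ i ∈ Finset.Icc 1 (n+2), (t (i-1) - t i) * f (x i) := by
    intro f hf
    rw [hμdef, integral_finset_sum_measure (fun i hi => ?_)]
    · refine Finset.sum_congr rfl fun i hi => ?_
      rw [integral_smul_measure, integral_dirac, smul_eq_mul,
        ENNReal.toReal_ofReal (hpnn i hi)]
    · refine Integrable.smul_measure ?_ ENNReal.ofReal_ne_top
      refine ⟨hf.aestronglyMeasurable, ?_⟩
      rw [hasFiniteIntegral_def, lintegral_dirac]
      exact ENNReal.coe_lt_top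
  refine ⟨μ, ?_, ?_, ?_, ?_⟩
  · -- probability measure
    constructor
    rw [hμdef, Measure.finset_sum_apply]
    simp only [Measure.smul_apply, measure_univ, smul_eq_mul, mul_one]
    rw [← ENNReal.ofReal_sum_of_nonneg hpnn, hsum1, ENNReal.ofReal_one]
  · -- support
    have hS : MeasurableSet ((((Finset.Icc 1 (n+2)).image x : Finset ℝ)) : Set ℝ) :=
      ((Finset.Icc 1 (n+2)).image x).measurableSet
    rw [hμdef, Measure.finset_sum_apply]
    refine Finset.sum_eq_zero fun i hi => ?_
    rw [Measure.smul_apply, Measure.dirac_apply' _ hS.compl]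
    have hmem : x i ∈ ((((Finset.Icc 1 (n+2)).image x : Finset ℝ)) : Set ℝ) :=
      Finset.mem_coe.2 (Finset.mem_image_of_mem x hi)
    rw [Set.indicator_of_notMem (Set.not_notMem.mpr hmem), smul_zero]
  · -- mean
    rw [hint (fun y => y) measurable_id]
    have hd := sum_decomp t x (n+1)
    rw [show n+1+1 = n+2 from rfl] at hd
    rw [hd, ht0, htn2v]
    set v : ℕ → ℝ := fun i => if i = 0 then G 0 - x 1 else if i ≤ n then G i else 0 with hvdef
    have hv : ∀ i ∈ Finset.range (n+1), t (i+1) * (x (i+2) - x (i+1)) = v i - v (i+1) := by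
      intro i hi
      rw [Finset.mem_range] at hi
      by_cases h0 : i = 0
      · subst h0
        have hv0 : v 0 = G 0 - x 1 := by simp [hvdef]
        have hv1 : v 1 = G 1 := by simp only [hvdef]; rw [if_neg (by omega), if_pos (by omega)]
        rw [hv0, hv1]
        have := hterm1
        norm_num at this ⊢
        linarith
      · by_cases hN : i = n
        · rw [hN]
          have hvn : v n = G n := by
            simp only [hvdef]; rw [if_neg (by omega), if_pos le_rfl]
          have hvn1 : v (n+1) = 0 := by
            simp only [hvdef]; rw [if_neg (by omega), if_neg (by omega)]
          rw [hvn, hvn1, sub_zero]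
          exact htermn1
        · have h1 : 1 ≤ i := by omega
          have h2 : i ≤ n - 1 := by omega
          have := hterm (i+1) (by omega) (by omega)
          simp only [Nat.add_sub_cancel] at this
          rw [this]
          have hvi : v i = G i := by
            simp only [hvdef]; rw [if_neg h0, if_pos (by omega)]
          have hvi1 : v (i+1) = G (i+1) := by
            simp only [hvdef]; rw [if_neg (by omega), if_pos (by omega)]
          rw [hvi, hvi1]
    rw [Finset.sum_congr rfl hv, Finset.sum_range_sub' v (n+1)]
    have hv0 : v 0 = G 0 - x 1 := by simp [hvdef]
    have hvn1 : v (n+1) = 0 := by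
      simp only [hvdef]; rw [if_neg (by omega), if_neg (by omega)]
    rw [hv0, hvn1]
    ring
  · -- calls
    intro j hj1 hjn
    rw [hint (fun y => max (y - K j) 0) ((measurable_id.sub measurable_const).max measurable_const)]
    have hd := sum_decomp t (fun i => max (x i - K j) 0) (n+1)
    rw [show n+1+1 = n+2 from rfl] at hd
    rw [hd, ht0, htn2v]
    have hg1 : max (x 1 - K j) 0 = 0 := by
      have : K 1 ≤ K j := hKle 1 j hj1 hjn
      exact max_eq_right (by linarith)
    have hgm0 : ∀ m, 2 ≤ m → m ≤ j+1 → max (x m - K j) 0 = 0 := by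
      intro m h2 hmj
      rw [hxk m h2 (by omega)]
      have : K (m-1) ≤ K j := hKle (m-1) j (by omega) hjn
      exact max_eq_right (by linarith)
    have hg0 : ∀ m, 1 ≤ m → m ≤ j+1 → max (x m - K j) 0 = 0 := by
      intro m h1 hmj
      rcases Nat.eq_or_lt_of_le h1 with h | h
      · rw [← h]; exact hg1
      · exact hgm0 m (by omega) hmj
    have hgm1 : ∀ m, j+1 ≤ m → m ≤ n+1 → max (x m - K j) 0 = x m - K j := by
      intro m hmj hmn
      rw [hxk m (by omega) hmn]
      have : K j ≤ K (m-1) := hKle j (m-1) (by omega) (by omega)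
      exact max_eq_left (by linarith)
    have hgn2 : max (x (n+2) - K j) 0 = x (n+2) - K j := by
      have : K j ≤ K n := hKle j n hjn le_rfl
      exact max_eq_left (by linarith)
    set w : ℕ → ℝ := fun i => if i ≤ j then G j else if i ≤ n then G i else 0 with hwdef
    have hw : ∀ i ∈ Finset.range (n+1),
        t (i+1) * (max (x (i+2) - K j) 0 - max (x (i+1) - K j) 0) = w i - w (i+1) := by
      intro i hi
      rw [Finset.mem_range] at hi
      by_cases hij : i + 1 ≤ j
      · rw [hg0 (i+1) (by omega) (by omega), hg0 (i+2) (by omega) (by omega)]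
        have hwi : w i = G j := by simp only [hwdef]; rw [if_pos (by omega)]
        have hwi1 : w (i+1) = G j := by simp only [hwdef]; rw [if_pos hij]
        rw [hwi, hwi1]
        ring
      · -- i ≥ j
        have hij' : j ≤ i := by omega
        by_cases hN : i = n
        · rw [hN]
          rw [hgn2, hgm1 (n+1) (by omega) le_rfl]
          have e : x (n+2) - K j - (x (n+1) - K j) = x (n+2) - x (n+1) := by ring
          rw [e, htermn1]
          have hwn : w n = G n := by
            simp only [hwdef]
            by_cases h : n ≤ j
            · rw [if_pos h, show j = n by omega]
            · rw [if_neg h, if_pos le_rfl]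
          have hwn1 : w (n+1) = 0 := by
            simp only [hwdef]; rw [if_neg (by omega), if_neg (by omega)]
          rw [hwn, hwn1, sub_zero]
        · rw [hgm1 (i+1) (by omega) (by omega), hgm1 (i+2) (by omega) (by omega)]
          have e : x (i+2) - K j - (x (i+1) - K j) = x (i+2) - x (i+1) := by ring
          rw [e]
          have := hterm (i+1) (by omega) (by omega)
          simp only [Nat.add_sub_cancel] at this
          rw [this]
          have hwi : w i = G i := by
            simp only [hwdef]
            by_cases h : i ≤ j
            · rw [if_pos h, show j = i by omega]
            · rw [if_neg h, if_pos (by omega)]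
          have hwi1 : w (i+1) = G (i+1) := by
            simp only [hwdef]; rw [if_neg (by omega), if_pos (by omega)]
          rw [hwi, hwi1]
    rw [Finset.sum_congr rfl hw, Finset.sum_range_sub' w (n+1)]
    have hw0 : w 0 = G j := by simp only [hwdef]; rw [if_pos (by omega)]
    have hwn1 : w (n+1) = 0 := by
      simp only [hwdef]; rw [if_neg (by omega), if_neg (by omega)]
    rw [hw0, hwn1, hg1]
    ring
end

section
/- Let (Ω, 𝓕, P) be a probability space, let 𝓖₁ and 𝓖₂ be independent sub-σ-algebras of 𝓕, let 𝓗₁ ⊆ 𝓖₁ and 𝓗₂ ⊆ 𝓖₂ be sub-σ-algebras, and let U and V be bounded real random variables with U measurable with respect to 𝓖₁ and V measurable with respect to 𝓖₂. Then, almost surely, E[UV | σ(𝓗₁ ∪ 𝓗₂)] = E[U | 𝓗₁]·E[V | 𝓗₂]. -/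
/-!
Both sides are `h1 ⊔ h2`-measurable and integrable (each is a product of independent integrable
factors), so it suffices to compare their integrals over `h1 ⊔ h2`-measurable sets. On a
rectangle `A ∩ B` with `A ∈ h1`, `B ∈ h2`, independence of `g1` and `g2` splits both integrals
as `(∫_A U) (∫_B V) = (∫_A E[U | h1]) (∫_B E[V | h2])`; such rectangles form a π-system
generating `h1 ⊔ h2`, and Dynkin's π-λ theorem extends the equality to all of `h1 ⊔ h2`.
-/

open MeasureTheory ProbabilityTheory

namespace MeasurableSpace

variable {Ω : Type*}

lemma isPiSystem_image2_inter {C D : Set (Set Ω)} (hC : IsPiSystem C) (hD : IsPiSystem D) :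
    IsPiSystem (Set.image2 (· ∩ ·) C D) := by
  rintro _ ⟨s₁, hs₁, t₁, ht₁, rfl⟩ _ ⟨s₂, hs₂, t₂, ht₂, rfl⟩ hst
  rw [Set.inter_inter_inter_comm] at hst ⊢
  exact Set.mem_image2_of_mem (hC _ hs₁ _ hs₂ (hst.mono Set.inter_subset_left))
    (hD _ ht₁ _ ht₂ (hst.mono Set.inter_subset_right))

lemma sup_eq_generateFrom_image2_inter (m₁ m₂ : MeasurableSpace Ω) :
    m₁ ⊔ m₂ = generateFrom
      (Set.image2 (· ∩ ·) {s | MeasurableSet[m₁] s} {t | MeasurableSet[m₂] t}) := by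
  refine le_antisymm (sup_le (fun s hs => ?_) (fun t ht => ?_)) (generateFrom_le ?_)
  · exact measurableSet_generateFrom ⟨s, hs, Set.univ, .univ, Set.inter_univ s⟩
  · exact measurableSet_generateFrom ⟨Set.univ, .univ, t, ht, Set.univ_inter t⟩
  · rintro _ ⟨s, hs, t, ht, rfl⟩
    exact (le_sup_left (a := m₁) s hs).inter (le_sup_right (a := m₁) t ht)

end MeasurableSpace

section

variable {α E : Type*} [NormedAddCommGroup E] [NormedSpace ℝ E] {m m₀ : MeasurableSpace α}
  {μ : Measure α} {f g : α → E}

theorem setIntegral_eq_setIntegral_of_isPiSystem {C : Set (Set α)} (hm : m ≤ m₀)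
    (h_eq : m = MeasurableSpace.generateFrom C) (h_inter : IsPiSystem C) (h_univ : Set.univ ∈ C)
    (hf : Integrable f μ) (hg : Integrable g μ)
    (basic : ∀ t ∈ C, ∫ x in t, f x ∂μ = ∫ x in t, g x ∂μ) {s : Set α}
    (hs : MeasurableSet[m] s) : ∫ x in s, f x ∂μ = ∫ x in s, g x ∂μ := by
  induction s, hs using MeasurableSpace.induction_on_inter h_eq h_inter with
  | empty => simp
  | basic t ht => exact basic t ht
  | compl t ht iht =>
    have h_total := basic _ h_univ
    rw [Measure.restrict_univ] at h_total
    rw [setIntegral_compl (hm _ ht) hf, setIntegral_compl (hm _ ht) hg, h_total, iht]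
  | iUnion t ht_disj ht iht =>
    rw [integral_iUnion (fun i => hm _ (ht i)) ht_disj hf.integrableOn,
      integral_iUnion (fun i => hm _ (ht i)) ht_disj hg.integrableOn]
    exact tsum_congr iht

end

namespace ProbabilityTheory

variable {Ω : Type*} {m₁ m₂ m₀ : MeasurableSpace Ω} {μ : Measure Ω} {f g : Ω → ℝ}

lemma Indep.indepFun (h : Indep m₁ m₂ μ) (hf : Measurable[m₁] f) (hg : Measurable[m₂] g) :
    IndepFun f g μ := by
  rw [IndepFun_iff_Indep]
  exact indep_of_indep_of_le_left (indep_of_indep_of_le_right h hg.comap_le) hf.comap_le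

lemma Indep.setIntegral_inter_mul_eq_mul (h : Indep m₁ m₂ μ) (hm₁ : m₁ ≤ m₀) (hm₂ : m₂ ≤ m₀)
    (hf : Measurable[m₁] f) (hg : Measurable[m₂] g) {s t : Set Ω}
    (hs : MeasurableSet[m₁] s) (ht : MeasurableSet[m₂] t) :
    ∫ ω in s ∩ t, f ω * g ω ∂μ = (∫ ω in s, f ω ∂μ) * ∫ ω in t, g ω ∂μ := by
  have h_indep := h.indepFun (hf.indicator hs) (hg.indicator ht)
  rw [← integral_indicator (hm₁ _ hs), ← integral_indicator (hm₂ _ ht),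
    ← integral_indicator ((hm₁ _ hs).inter (hm₂ _ ht)), ← h_indep.integral_mul_eq_mul_integral
      ((hf.mono hm₁ le_rfl).indicator (hm₁ _ hs)).aestronglyMeasurable
      ((hg.mono hm₂ le_rfl).indicator (hm₂ _ ht)).aestronglyMeasurable]
  simp_rw [Set.inter_indicator_mul]
  rfl

theorem Indep.condExp_mul [IsFiniteMeasure μ] (h : Indep m₁ m₂ μ) (hm₁ : m₁ ≤ m₀)
    (hm₂ : m₂ ≤ m₀) {n₁ n₂ : MeasurableSpace Ω} (hn₁ : n₁ ≤ m₁) (hn₂ : n₂ ≤ m₂)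
    (hf : Measurable[m₁] f) (hg : Measurable[m₂] g) (hfi : Integrable f μ)
    (hgi : Integrable g μ) :
    μ[f * g | n₁ ⊔ n₂] =ᵐ[μ] μ[f | n₁] * μ[g | n₂] := by
  have hn : n₁ ⊔ n₂ ≤ m₀ := sup_le (hn₁.trans hm₁) (hn₂.trans hm₂)
  have hcf : Measurable[n₁] (μ[f | n₁]) := stronglyMeasurable_condExp.measurable
  have hcg : Measurable[n₂] (μ[g | n₂]) := stronglyMeasurable_condExp.measurable
  have h_int : Integrable (μ[f | n₁] * μ[g | n₂]) μ :=
    (h.indepFun (hcf.mono hn₁ le_rfl) (hcg.mono hn₂ le_rfl)).integrable_mul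
      integrable_condExp integrable_condExp
  refine (ae_eq_condExp_of_forall_setIntegral_eq hn ((h.indepFun hf hg).integrable_mul hfi hgi)
    (fun _ _ _ => h_int.integrableOn) (fun s hs _ => ?_)
    ((hcf.mono le_sup_left le_rfl).mul (hcg.mono le_sup_right le_rfl)).aestronglyMeasurable).symm
  refine setIntegral_eq_setIntegral_of_isPiSystem hn
    (MeasurableSpace.sup_eq_generateFrom_image2_inter n₁ n₂)
    (MeasurableSpace.isPiSystem_image2_inter n₁.isPiSystem_measurableSet
      n₂.isPiSystem_measurableSet)
    ⟨Set.univ, .univ, Set.univ, .univ, Set.univ_inter _⟩ h_int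
    ((h.indepFun hf hg).integrable_mul hfi hgi) ?_ hs
  rintro _ ⟨s, hs, t, ht, rfl⟩
  simp only [Pi.mul_apply]
  rw [h.setIntegral_inter_mul_eq_mul hm₁ hm₂ (hcf.mono hn₁ le_rfl) (hcg.mono hn₂ le_rfl)
    (hn₁ _ hs) (hn₂ _ ht), h.setIntegral_inter_mul_eq_mul hm₁ hm₂ hf hg (hn₁ _ hs) (hn₂ _ ht),
    setIntegral_condExp (hn₁.trans hm₁) hfi hs, setIntegral_condExp (hn₂.trans hm₂) hgi ht]

end ProbabilityTheory

/-- Factorization of conditional expectations across independent σ-algebras: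
if 𝓖₁ ⊥ 𝓖₂, 𝓗₁ ⊆ 𝓖₁, 𝓗₂ ⊆ 𝓖₂, U is bounded 𝓖₁-measurable and V is bounded
𝓖₂-measurable, then E[UV | σ(𝓗₁ ∪ 𝓗₂)] = E[U | 𝓗₁]·E[V | 𝓗₂] a.s. -/
theorem condexp_mul_indep_sigma_algebras
    {Ω : Type*} [m0 : MeasurableSpace Ω] (P : Measure Ω) [IsProbabilityMeasure P]
    (g1 g2 h1 h2 : MeasurableSpace Ω)
    (hg1 : g1 ≤ m0) (hg2 : g2 ≤ m0) (hh1 : h1 ≤ g1) (hh2 : h2 ≤ g2)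
    (hindep : Indep g1 g2 P)
    (U V : Ω → ℝ)
    (hU : Measurable[g1] U) (hV : Measurable[g2] V)
    (hUb : ∃ C, ∀ ω, |U ω| ≤ C) (hVb : ∃ C, ∀ ω, |V ω| ≤ C) :
    P[fun ω => U ω * V ω | h1 ⊔ h2]
      =ᵐ[P] fun ω => (P[U | h1]) ω * (P[V | h2]) ω := by
  obtain ⟨C, hC⟩ := hUb
  obtain ⟨D, hD⟩ := hVb
  exact hindep.condExp_mul hg1 hg2 hh1 hh2 hU hV
    (.of_bound (hU.mono hg1 le_rfl).aestronglyMeasurable C (.of_forall hC))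
    (.of_bound (hV.mono hg2 le_rfl).aestronglyMeasurable D (.of_forall hD))
end

section
/- Let s > 0 and θ ∈ (0, π/2), and let D = {(r cos v, r sin v) : r ≥ 0, v ∈ [0, θ]} ⊆ ℝ². Define F : ℝ² → ℝ by F(w_x, w_y) = ∫_D (2πs)^{−1} exp(−((x − w_x)² + (y − w_y)²)/(2s)) dx dy. Then F is differentiable and, for every (w_x, w_y), ∂F/∂w_x (w_x, w_y) = [exp(−(w_y/tan θ − w_x)²/(2s(1 + 1/tan²θ)))/√(2πs(1 + 1/tan²θ))]·Φ((w_x/tan θ + w_y)/√(s(1 + 1/tan²θ))), where Φ is the standard normal distribution function. -/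
open MeasureTheory Real

/-- The standard normal distribution function Φ. -/
noncomputable def stdNormalCDF (y : ℝ) : ℝ :=
  ∫ z in Set.Iic y, (Real.sqrt (2 * Real.pi))⁻¹ * Real.exp (-z ^ 2 / 2)

/-!
Differentiation under the integral sign is justified because the gradient of the Gaussian density
`φ`, translated by any `w` in a unit ball, is dominated by an integrable product of one-dimensional
Gaussians; it gives `∂F/∂w_x (w) = ∫_D φ(z - w) (z_x - w_x) / s dz`. The cone is the wedge
`0 ≤ y ≤ x tan θ`; integrating first in `x` over `(y / tan θ, ∞)` the integrand is an exact
derivative, leaving `exp (-(y / tan θ - w_x)² / (2s))`. Completing the square in `y` turns the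
remaining integral over `y > 0` into a Gaussian tail, that is, a value of `Φ`.
-/

open Set Filter Topology

lemma hasFDerivAt_setIntegral_comp_sub {E : Type*} [NormedAddCommGroup E]
    [NormedSpace ℝ E] [MeasurableSpace E] [BorelSpace E] [SecondCountableTopology E]
    {μ : Measure E} [μ.IsAddRightInvariant] {K : E → ℝ} {K' : E → E →L[ℝ] ℝ} {b : E → ℝ}
    (hK : ∀ u, HasFDerivAt K (K' u) u) (hK' : Continuous K') (hKi : Integrable K μ)
    (hbi : Integrable b μ) (hb : ∀ u v, ‖v‖ < 1 → ‖K' (u + v)‖ ≤ b u) (D : Set E)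
    (w₀ : E) :
    HasFDerivAt (fun w => ∫ z in D, K (z - w) ∂μ) (-∫ z in D, K' (z - w₀) ∂μ) w₀ := by
  have hKc : Continuous K := continuous_iff_continuousAt.2 fun u => (hK u).continuousAt
  rw [← integral_neg]
  refine hasFDerivAt_integral_of_dominated_of_fderiv_le (F := fun w z => K (z - w))
    (F' := fun w z => -K' (z - w)) (bound := fun z => b (z - w₀))
    (Metric.ball_mem_nhds w₀ one_pos)
    (Eventually.of_forall fun w =>
      (by fun_prop : Continuous fun z => K (z - w)).aestronglyMeasurable)
    (hKi.comp_sub_right w₀).integrableOn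
    (by fun_prop : Continuous fun z => -K' (z - w₀)).aestronglyMeasurable
    (Eventually.of_forall fun z w hw => ?_) (hbi.comp_sub_right w₀).integrableOn
    (Eventually.of_forall fun z w _ => ?_)
  · rw [norm_neg, show z - w = z - w₀ + (w₀ - w) by abel]
    exact hb _ _ (by rwa [← dist_eq_norm, dist_comm])
  · simpa [Function.comp_def] using (hK (z - w)).comp w ((hasFDerivAt_id w).const_sub z)

section Gaussian1D

variable {s : ℝ}

lemma integrable_abs_add_one_mul_exp_neg_mul_sq {b : ℝ} (hb : 0 < b) :
    Integrable fun x : ℝ => (|x| + 1) * exp (-b * x ^ 2) := by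
  refine ((integrable_mul_exp_neg_mul_sq hb).abs.add (integrable_exp_neg_mul_sq hb)).congr
    (Eventually.of_forall fun x => ?_)
  simp only [Pi.add_apply, abs_mul, abs_of_pos (exp_pos _)]
  ring

lemma integrable_exp_neg_sq_sub_div (hs : 0 < s) (m : ℝ) :
    Integrable fun x : ℝ => exp (-(x - m) ^ 2 / (2 * s)) :=
  ((integrable_exp_neg_mul_sq (inv_pos.2 (by positivity : (0 : ℝ) < 2 * s))).comp_sub_right
    m).congr (Eventually.of_forall fun x => congrArg exp (by ring))

lemma integrable_sub_div_mul_exp_neg_sq_sub_div (hs : 0 < s) (m : ℝ) :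
    Integrable fun x : ℝ => (x - m) / s * exp (-(x - m) ^ 2 / (2 * s)) :=
  (((integrable_mul_exp_neg_mul_sq (inv_pos.2 (by positivity : (0 : ℝ) < 2 * s))).comp_sub_right
    m).div_const s).congr (Eventually.of_forall fun x => by
      dsimp only
      rw [show -(2 * s)⁻¹ * (x - m) ^ 2 = -(x - m) ^ 2 / (2 * s) by ring]
      ring)

lemma abs_add_one_mul_exp_neg_sq_add_le (hs : 0 < s) (t : ℝ) {v : ℝ} (hv : |v| ≤ 1) :
    (|t + v| + 1) * exp (-(t + v) ^ 2 / (2 * s))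
      ≤ 2 * exp (2 * s)⁻¹ * ((|t| + 1) * exp (-(4 * s)⁻¹ * t ^ 2)) := by
  have hv2 : v ^ 2 ≤ 1 := by nlinarith [sq_abs v, abs_nonneg v]
  have habs : |t + v| + 1 ≤ 2 * (|t| + 1) := by linarith [abs_add_le t v, abs_nonneg t]
  -- `(t + v)² ≥ t²/2 - v²`: half of the Gaussian decay pays for the shift
  have hexp : exp (-(t + v) ^ 2 / (2 * s)) ≤ exp (2 * s)⁻¹ * exp (-(4 * s)⁻¹ * t ^ 2) := by
    rw [← exp_add, exp_le_exp, ← sub_nonneg]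
    have hgap : (2 * s)⁻¹ + -(4 * s)⁻¹ * t ^ 2 - -(t + v) ^ 2 / (2 * s)
        = ((t + 2 * v) ^ 2 + 2 * (1 - v ^ 2)) / (4 * s) := by
      field_simp; ring
    rw [hgap]
    positivity
  calc (|t + v| + 1) * exp (-(t + v) ^ 2 / (2 * s))
      ≤ 2 * (|t| + 1) * (exp (2 * s)⁻¹ * exp (-(4 * s)⁻¹ * t ^ 2)) :=
        mul_le_mul habs hexp (exp_pos _).le (by positivity)
    _ = _ := by ring

lemma integral_Ioi_comp_sub_right {E : Type*} [NormedAddCommGroup E] [NormedSpace ℝ E]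
    (f : ℝ → E) (a m : ℝ) : ∫ x in Ioi a, f (x - m) = ∫ x in Ioi (a - m), f x := by
  have h := (measurePreserving_sub_right volume m).setIntegral_preimage_emb
    (measurableEmbedding_subRight m) f (Ioi (a - m))
  rwa [preimage_sub_const_Ioi, sub_add_cancel] at h

lemma integral_Ioi_sub_div_mul_exp_neg_sq_sub_div (hs : 0 < s) (m a : ℝ) :
    ∫ x in Ioi a, (x - m) / s * exp (-(x - m) ^ 2 / (2 * s))
      = exp (-(a - m) ^ 2 / (2 * s)) := by
  have hderiv : ∀ x ∈ Ici a, HasDerivAt (fun x => -exp (-(x - m) ^ 2 / (2 * s)))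
      ((x - m) / s * exp (-(x - m) ^ 2 / (2 * s))) x := by
    intro x _
    have h : HasDerivAt (fun x => -(x - m) ^ 2 / (2 * s)) (-(2 * (x - m)) / (2 * s)) x := by
      simpa using (((hasDerivAt_id x).sub_const m).pow 2).neg.div_const (2 * s)
    refine h.exp.neg.congr_deriv ?_
    field_simp
  have htendsto : Tendsto (fun x => -exp (-(x - m) ^ 2 / (2 * s))) atTop (𝓝 0) := by
    have hsq : Tendsto (fun x => (x - m) ^ 2) atTop atTop :=
      (tendsto_pow_atTop two_ne_zero).comp (tendsto_atTop_add_const_right _ (-m) tendsto_id)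
    simpa using (tendsto_exp_atBot.comp
      ((tendsto_neg_atTop_atBot.comp hsq).atBot_div_const (by positivity : (0 : ℝ) < 2 * s))).neg
  rw [integral_Ioi_of_hasDerivAt_of_tendsto' hderiv
    (integrable_sub_div_mul_exp_neg_sq_sub_div hs m).integrableOn htendsto]
  ring

lemma integral_Ioi_zero_exp_neg_sq_sub_div (hs : 0 < s) (m : ℝ) :
    ∫ y in Ioi 0, exp (-(y - m) ^ 2 / (2 * s)) = √s * √(2 * π) * stdNormalCDF (m / √s) := by
  have hσ : 0 < √s := sqrt_pos.2 hs
  have hscale : ∀ z, -(√s * z) ^ 2 / (2 * s) = -(-z) ^ 2 / 2 := fun z => by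
    rw [mul_pow, sq_sqrt hs.le]
    field_simp
  calc ∫ y in Ioi 0, exp (-(y - m) ^ 2 / (2 * s))
      = ∫ u in Ioi (√s * (-(m / √s))), exp (-u ^ 2 / (2 * s)) := by
        rw [integral_Ioi_comp_sub_right (fun u => exp (-u ^ 2 / (2 * s))), zero_sub,
          mul_neg, mul_div_cancel₀ _ hσ.ne']
    _ = √s * ∫ z in Ioi (-(m / √s)), exp (-(-z) ^ 2 / 2) := by
        rw [← integral_comp_mul_left_Ioi' _ _ hσ, smul_eq_mul]
        simp_rw [hscale]
    _ = √s * √(2 * π) * stdNormalCDF (m / √s) := by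
        rw [integral_comp_neg_Ioi (f := fun z => exp (-z ^ 2 / 2)), neg_neg, stdNormalCDF,
          integral_const_mul, ← mul_assoc, mul_assoc √s, mul_inv_cancel₀ (by positivity),
          mul_one]

end Gaussian1D

section HeatKernel

variable {s : ℝ}

noncomputable def heatKernel (s : ℝ) (u : ℝ × ℝ) : ℝ :=
  (2 * π * s)⁻¹ * exp (-(u.1 ^ 2 + u.2 ^ 2) / (2 * s))

noncomputable def heatKernelFDeriv (s : ℝ) (u : ℝ × ℝ) : ℝ × ℝ →L[ℝ] ℝ :=
  -(heatKernel s u / s) •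
    (u.1 • ContinuousLinearMap.fst ℝ ℝ ℝ + u.2 • ContinuousLinearMap.snd ℝ ℝ ℝ)

lemma heatKernel_eq_mul (s : ℝ) (u : ℝ × ℝ) :
    heatKernel s u
      = (2 * π * s)⁻¹ * (exp (-u.1 ^ 2 / (2 * s)) * exp (-u.2 ^ 2 / (2 * s))) := by
  rw [heatKernel, ← exp_add]
  ring_nf

lemma hasFDerivAt_heatKernel (s : ℝ) (u : ℝ × ℝ) :
    HasFDerivAt (heatKernel s) (heatKernelFDeriv s u) u := by
  have h1 : HasFDerivAt (fun u : ℝ × ℝ => u.1 ^ 2) _ u :=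
    (hasFDerivAt_fst (𝕜 := ℝ) (p := u)).pow 2
  have h2 : HasFDerivAt (fun u : ℝ × ℝ => u.2 ^ 2) _ u :=
    (hasFDerivAt_snd (𝕜 := ℝ) (p := u)).pow 2
  have hq : HasFDerivAt (fun u : ℝ × ℝ => -(u.1 ^ 2 + u.2 ^ 2) * (2 * s)⁻¹) _ u :=
    (h1.add h2).neg.mul_const (2 * s)⁻¹
  have hK : heatKernel s = fun u => (2 * π * s)⁻¹ * exp (-(u.1 ^ 2 + u.2 ^ 2) * (2 * s)⁻¹) := by
    funext u
    rw [heatKernel, div_eq_mul_inv]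
  rw [hK]
  refine (hq.exp.const_mul _).congr_fderiv (ContinuousLinearMap.ext fun v => ?_)
  simp only [heatKernelFDeriv, hK, smul_apply, add_apply, neg_apply, smul_eq_mul, nsmul_eq_mul,
    ContinuousLinearMap.coe_fst', ContinuousLinearMap.coe_snd', Nat.add_one_sub_one, pow_one]
  ring

lemma continuous_heatKernelFDeriv (s : ℝ) : Continuous (heatKernelFDeriv s) := by
  unfold heatKernelFDeriv heatKernel
  fun_prop

lemma integrable_heatKernel (hs : 0 < s) : Integrable (heatKernel s) := by
  have hg := integrable_exp_neg_mul_sq (inv_pos.2 (by positivity : (0 : ℝ) < 2 * s))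
  refine ((hg.mul_prod hg).const_mul (2 * π * s)⁻¹).congr (Eventually.of_forall fun u => ?_)
  simp only [heatKernel_eq_mul]
  ring_nf

lemma norm_heatKernelFDeriv_le (hs : 0 < s) (u : ℝ × ℝ) :
    ‖heatKernelFDeriv s u‖ ≤ (2 * π * s)⁻¹ * s⁻¹ *
      ((|u.1| + 1) * exp (-u.1 ^ 2 / (2 * s)) * ((|u.2| + 1) * exp (-u.2 ^ 2 / (2 * s)))) := by
  have hlin : ‖u.1 • ContinuousLinearMap.fst ℝ ℝ ℝ + u.2 • ContinuousLinearMap.snd ℝ ℝ ℝ‖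
      ≤ (|u.1| + 1) * (|u.2| + 1) := by
    refine (norm_add_le _ _).trans ?_
    rw [norm_smul, norm_smul, Real.norm_eq_abs, Real.norm_eq_abs]
    nlinarith [ContinuousLinearMap.norm_fst_le ℝ ℝ ℝ, ContinuousLinearMap.norm_snd_le ℝ ℝ ℝ,
      abs_nonneg u.1, abs_nonneg u.2, mul_nonneg (abs_nonneg u.1) (abs_nonneg u.2)]
  rw [heatKernelFDeriv, norm_smul, norm_neg, Real.norm_eq_abs,
    abs_of_pos (by rw [heatKernel]; positivity), heatKernel_eq_mul]
  calc _ ≤ (2 * π * s)⁻¹ * (exp (-u.1 ^ 2 / (2 * s)) * exp (-u.2 ^ 2 / (2 * s))) / s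
        * ((|u.1| + 1) * (|u.2| + 1)) := by gcongr
    _ = _ := by ring

lemma exists_integrable_bound_heatKernelFDeriv (hs : 0 < s) :
    ∃ b : ℝ × ℝ → ℝ, Integrable b ∧
      ∀ u v, ‖v‖ < 1 → ‖heatKernelFDeriv s (u + v)‖ ≤ b u := by
  have hφ := integrable_abs_add_one_mul_exp_neg_mul_sq
    (inv_pos.2 (by positivity : (0 : ℝ) < 4 * s))
  refine ⟨_, (hφ.mul_prod hφ).const_mul ((2 * π * s)⁻¹ * s⁻¹ * (2 * exp (2 * s)⁻¹) ^ 2),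
    fun u v hv => (norm_heatKernelFDeriv_le hs (u + v)).trans ?_⟩
  have h1 := abs_add_one_mul_exp_neg_sq_add_le hs u.1 ((norm_fst_le v).trans hv.le)
  have h2 := abs_add_one_mul_exp_neg_sq_add_le hs u.2 ((norm_snd_le v).trans hv.le)
  rw [Prod.fst_add, Prod.snd_add]
  calc _ ≤ (2 * π * s)⁻¹ * s⁻¹
        * ((2 * exp (2 * s)⁻¹ * ((|u.1| + 1) * exp (-(4 * s)⁻¹ * u.1 ^ 2)))
          * (2 * exp (2 * s)⁻¹ * ((|u.2| + 1) * exp (-(4 * s)⁻¹ * u.2 ^ 2)))) := by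
        gcongr
    _ = _ := by ring

lemma integrable_heatKernelFDeriv (hs : 0 < s) : Integrable (heatKernelFDeriv s) := by
  obtain ⟨b, hbi, hb⟩ := exists_integrable_bound_heatKernelFDeriv hs
  refine hbi.mono' (continuous_heatKernelFDeriv s).aestronglyMeasurable
    (Eventually.of_forall fun u => ?_)
  simpa using hb u 0 (by simp)

lemma hasFDerivAt_setIntegral_heatKernel (hs : 0 < s) (D : Set (ℝ × ℝ)) (w : ℝ × ℝ) :
    HasFDerivAt (fun w => ∫ z in D, heatKernel s (z - w))
      (-∫ z in D, heatKernelFDeriv s (z - w)) w := by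
  obtain ⟨b, hbi, hb⟩ := exists_integrable_bound_heatKernelFDeriv hs
  exact hasFDerivAt_setIntegral_comp_sub (hasFDerivAt_heatKernel s)
    (continuous_heatKernelFDeriv s) (integrable_heatKernel hs) hbi hb D w

lemma hasDerivAt_setIntegral_heatKernel_fst (hs : 0 < s) (D : Set (ℝ × ℝ)) (wx wy : ℝ) :
    HasDerivAt (fun a => ∫ z in D, heatKernel s (z - (a, wy)))
      (∫ z in D, heatKernel s (z - (wx, wy)) * ((z.1 - wx) / s)) wx := by
  have h := (hasFDerivAt_setIntegral_heatKernel hs D (wx, wy)).comp_hasDerivAt wx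
    ((hasDerivAt_id wx).prodMk (hasDerivAt_const wx wy))
  rw [neg_apply, ContinuousLinearMap.integral_apply
    ((integrable_heatKernelFDeriv hs).comp_sub_right (wx, wy)).integrableOn,
    ← integral_neg] at h
  refine h.congr_deriv (congrArg _ (funext fun z => ?_))
  simp only [heatKernelFDeriv, Prod.fst_sub, smul_add, neg_smul, add_apply, neg_apply,
    smul_apply, ContinuousLinearMap.coe_fst', ContinuousLinearMap.coe_snd', smul_eq_mul, mul_one,
    mul_zero, neg_zero, add_zero, neg_neg]
  ring

end HeatKernel

section Wedge

def wedge (c : ℝ) : Set (ℝ × ℝ) := {p | 0 ≤ p.2 ∧ p.2 ≤ c * p.1}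

lemma measurableSet_wedge (c : ℝ) : MeasurableSet (wedge c) :=
  (measurableSet_le measurable_const measurable_snd).inter
    (measurableSet_le measurable_snd (measurable_fst.const_mul c))

lemma polarSector_eq_wedge_tan {θ : ℝ} (hθ0 : 0 < θ) (hθ : θ < π / 2) :
    {p : ℝ × ℝ | ∃ r ≥ (0 : ℝ), ∃ v ∈ Icc (0 : ℝ) θ, p = (r * cos v, r * sin v)}
      = wedge (tan θ) := by
  have hcosθ : 0 < cos θ := cos_pos_of_mem_Ioo ⟨by linarith, hθ⟩
  ext ⟨x, y⟩
  simp only [mem_ofPred_eq, wedge, Prod.mk.injEq]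
  constructor
  · rintro ⟨r, hr, v, ⟨hv0, hvθ⟩, rfl, rfl⟩
    have hsin : 0 ≤ sin v := sin_nonneg_of_nonneg_of_le_pi hv0 (by linarith)
    have hsub : 0 ≤ sin (θ - v) := sin_nonneg_of_nonneg_of_le_pi (by linarith) (by linarith)
    refine ⟨by positivity, ?_⟩
    rw [sin_sub] at hsub
    have hgap : sin θ / cos θ * (r * cos v) - r * sin v
        = r * (sin θ * cos v - cos θ * sin v) / cos θ := by
      field_simp
    rw [tan_eq_sin_div_cos, ← sub_nonneg, hgap]
    positivity
  · rintro ⟨hy, hyx⟩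
    have htanθ : 0 < tan θ := tan_pos_of_pos_of_lt_pi_div_two hθ0 hθ
    obtain hx | hx := (nonneg_of_mul_nonneg_right (hy.trans hyx) htanθ).eq_or_lt
    · have hy0 : y = 0 := le_antisymm (by simpa [← hx] using hyx) hy
      exact ⟨0, le_rfl, 0, ⟨le_rfl, hθ0.le⟩, by simp [← hx], by simp [hy0]⟩
    · set v := arctan (y / x)
      have hv0 : 0 ≤ v := arctan_nonneg.2 (by positivity)
      have hvθ : v ≤ θ := by
        rw [← arctan_tan (x := θ) (by linarith) hθ]
        exact arctan_strictMono.monotone (by rwa [div_le_iff₀ hx])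
      have hcos : 0 < cos v := cos_arctan_pos _
      refine ⟨x / cos v, by positivity, v, ⟨hv0, hvθ⟩, by field_simp, ?_⟩
      calc y = x * tan v := by rw [tan_arctan]; field_simp
        _ = x / cos v * sin v := by rw [tan_eq_sin_div_cos]; ring

lemma setIntegral_wedge {E : Type*} [NormedAddCommGroup E] [NormedSpace ℝ E] {c : ℝ}
    (hc : 0 < c) {f : ℝ × ℝ → E} (hf : Integrable f) :
    ∫ z in wedge c, f z = ∫ y in Ioi 0, ∫ x in Ioi (y / c), f (x, y) := by
  have hfiber : ∀ y, (∫ x, (wedge c).indicator f (x, y))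
      = (Ici 0).indicator (fun y => ∫ x in Ici (y / c), f (x, y)) y := by
    intro y
    by_cases hy : 0 ≤ y
    · rw [indicator_of_mem (mem_Ici.2 hy), ← integral_indicator measurableSet_Ici]
      congr 1 with x
      simp only [indicator_apply, wedge, mem_ofPred_eq, mem_Ici, hy, true_and, div_le_iff₀ hc,
        mul_comm x]
    · simp [wedge, hy]
  rw [← integral_indicator (measurableSet_wedge c), Measure.volume_eq_prod,
    integral_prod_symm _ (hf.indicator (measurableSet_wedge c))]
  simp_rw [hfiber, integral_indicator measurableSet_Ici, integral_Ici_eq_integral_Ioi]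

end Wedge

section WedgeIntegral

variable {s c : ℝ}

/-- Completing the square in `y`. -/
lemma exp_neg_sq_mul_exp_neg_sq_eq (hs : s ≠ 0) (hc : c ≠ 0) (wx wy y : ℝ) :
    exp (-(y - wy) ^ 2 / (2 * s)) * exp (-(y / c - wx) ^ 2 / (2 * s))
      = exp (-(wy / c - wx) ^ 2 / (2 * s * (1 + 1 / c ^ 2)))
        * exp (-(y - (wy + wx / c) / (1 + 1 / c ^ 2)) ^ 2 / (2 * (s / (1 + 1 / c ^ 2)))) := by
  have hk : 1 + 1 / c ^ 2 ≠ 0 := by positivity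
  rw [← exp_add, ← exp_add]
  congr 1
  field_simp
  ring

lemma inv_mul_sqrt_div_mul_sqrt {k : ℝ} (hs : 0 < s) (hk : 0 < k) :
    (2 * π * s)⁻¹ * (√(s / k) * √(2 * π)) = (√(2 * π * s * k))⁻¹ := by
  have hprod : √(2 * π * s * k) * (√(s / k) * √(2 * π)) = 2 * π * s := by
    rw [← sqrt_mul (by positivity), ← sqrt_mul (by positivity),
      show 2 * π * s * k * (s / k * (2 * π)) = (2 * π * s) ^ 2 by field_simp,
      sqrt_sq (by positivity)]
  refine eq_inv_of_mul_eq_one_left ?_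
  rw [mul_assoc, mul_comm _ √(2 * π * s * k), hprod, inv_mul_cancel₀ (by positivity)]

lemma div_div_sqrt_div {k : ℝ} (hs : 0 < s) (hk : 0 < k) (a : ℝ) :
    a / k / √(s / k) = a / √(s * k) := by
  rw [show s * k = s / k * k ^ 2 by field_simp, sqrt_mul (by positivity), sqrt_sq hk.le,
    div_div, mul_comm]

lemma setIntegral_wedge_heatKernel_mul (hs : 0 < s) (hc : 0 < c) (wx wy : ℝ) :
    ∫ z in wedge c, heatKernel s (z - (wx, wy)) * ((z.1 - wx) / s)
      = exp (-(wy / c - wx) ^ 2 / (2 * s * (1 + 1 / c ^ 2)))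
          / √(2 * π * s * (1 + 1 / c ^ 2))
          * stdNormalCDF ((wx / c + wy) / √(s * (1 + 1 / c ^ 2))) := by
  have hk : 0 < 1 + 1 / c ^ 2 := by positivity
  have hg := (integrable_exp_neg_sq_sub_div hs wy).const_mul (2 * π * s)⁻¹
  have hh := integrable_sub_div_mul_exp_neg_sq_sub_div hs wx
  calc ∫ z in wedge c, heatKernel s (z - (wx, wy)) * ((z.1 - wx) / s)
      = ∫ z in wedge c, (2 * π * s)⁻¹ * exp (-(z.2 - wy) ^ 2 / (2 * s))
          * ((z.1 - wx) / s * exp (-(z.1 - wx) ^ 2 / (2 * s))) := by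
        congr 1 with z
        rw [heatKernel_eq_mul, Prod.fst_sub, Prod.snd_sub]
        ring
    _ = ∫ y in Ioi 0, (2 * π * s)⁻¹ * exp (-(y - wy) ^ 2 / (2 * s))
          * exp (-(y / c - wx) ^ 2 / (2 * s)) := by
        rw [setIntegral_wedge hc ((hh.mul_prod hg).congr
          (Eventually.of_forall fun z => mul_comm _ _))]
        simp_rw [integral_const_mul, integral_Ioi_sub_div_mul_exp_neg_sq_sub_div hs]
    _ = (2 * π * s)⁻¹ * exp (-(wy / c - wx) ^ 2 / (2 * s * (1 + 1 / c ^ 2)))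
          * (√(s / (1 + 1 / c ^ 2)) * √(2 * π)
            * stdNormalCDF ((wy + wx / c) / (1 + 1 / c ^ 2) / √(s / (1 + 1 / c ^ 2)))) := by
        simp_rw [mul_assoc, exp_neg_sq_mul_exp_neg_sq_eq hs.ne' hc.ne', ← mul_assoc,
          integral_const_mul, integral_Ioi_zero_exp_neg_sq_sub_div (div_pos hs hk)]
        ring
    _ = _ := by
        rw [div_div_sqrt_div hs hk, add_comm wy, div_eq_mul_inv (exp _),
          ← inv_mul_sqrt_div_mul_sqrt hs hk]
        ring

end WedgeIntegral

/-- Explicit formula for the partial derivative in w_x of the Gaussian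
probability F(w) = P(w + √s·Z ∈ D) of a cone D of opening angle θ. -/
theorem cone_probability_partial_deriv_wx
    (s θ : ℝ) (hs : 0 < s) (hθ1 : 0 < θ) (hθ2 : θ < Real.pi / 2)
    (D : Set (ℝ × ℝ))
    (hD : D = {p : ℝ × ℝ | ∃ r ≥ (0 : ℝ), ∃ v ∈ Set.Icc (0 : ℝ) θ,
      p = (r * Real.cos v, r * Real.sin v)})
    (F : ℝ × ℝ → ℝ)
    (hF : ∀ wx wy, F (wx, wy) = ∫ z in D,
      (2 * Real.pi * s)⁻¹ * Real.exp (-((z.1 - wx) ^ 2 + (z.2 - wy) ^ 2) / (2 * s))) :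
    Differentiable ℝ F ∧
    ∀ wx wy, deriv (fun a => F (a, wy)) wx =
      Real.exp (-(wy / Real.tan θ - wx) ^ 2 / (2 * s * (1 + 1 / Real.tan θ ^ 2)))
        / Real.sqrt (2 * Real.pi * s * (1 + 1 / Real.tan θ ^ 2))
        * stdNormalCDF ((wx / Real.tan θ + wy)
            / Real.sqrt (s * (1 + 1 / Real.tan θ ^ 2))) := by
  have hF : F = fun w => ∫ z in wedge (tan θ), heatKernel s (z - w) := by
    funext ⟨wx, wy⟩
    rw [hF, hD, polarSector_eq_wedge_tan hθ1 hθ2]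
    rfl
  refine ⟨fun w => (hF ▸ hasFDerivAt_setIntegral_heatKernel hs _ w).differentiableAt,
    fun wx wy => ?_⟩
  rw [hF, (hasDerivAt_setIntegral_heatKernel_fst hs _ wx wy).deriv,
    setIntegral_wedge_heatKernel_mul hs (tan_pos_of_pos_of_lt_pi_div_two hθ1 hθ2)]
end
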